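/- For each fixed i ∈ {1,2,…,m−2}, with H_{i,i+1}(n) = A_i(n)²·A_{i+1}(n)² + (2/3)·A_i(n)·A_{i+1}(n)·(A_i(n)² + A_{i+1}(n)²), the process M_{i,i+1}(n) = H_{i,i+1}(n) − (4n/m)·A_i(n)·A_{i+1}(n) − (2/m²)·n² + (1/(3m) − 2/m²)·n is a martingale with respect to the filtration (F_n), i.e. E[M_{i,i+1}(n+1) | F_n] = M_{i,i+1}(n) for every n ≥ 0. -/

import Mathlib

open MeasureTheory ProbabilityTheory Filter
open scoped ENNReal

/-- The `m` possible step vectors of the competition process on the `m - 1` gaps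
(0-indexed): `step m 0 = -e₀`, `step m k = e_{k-1} - e_k` for `0 < k < m - 1`, and
`step m (m-1) = e_{m-2}`. -/
def step (m : ℕ) (k : Fin m) : Fin (m - 1) → ℤ := fun j =>
  (if (j : ℕ) + 1 = (k : ℕ) then 1 else 0) - (if (j : ℕ) = (k : ℕ) then 1 else 0)

/-!
Write `M n = P_n (A_i n, A_{i+1} n)` for the polynomial `pairPotential m n`. Given `F_n`, the next
step is independent and uniform on the `m` step vectors, so `E[M (n+1) | F_n]` is the average of
`P_{n+1}` over the `m` possible moves of `A`. Only the steps `k = i, i+1, i+2` move the pair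
`(A_i, A_{i+1})`, by `(-1,0)`, `(1,-1)` and `(0,1)`, and the polynomial identity
`(m-3) P_{n+1}(u,v) + P_{n+1}(u-1,v) + P_{n+1}(u+1,v-1) + P_{n+1}(u,v+1) = m P_n(u,v)` closes the
argument. Integrability is free because `A n` takes only finitely many values almost surely.
-/

open scoped Pointwise

section FiniteRange

variable {Ω F : Type*} {ℱ mΩ : MeasurableSpace Ω} {μ : Measure Ω}
  [MeasurableSpace F] [MeasurableSingletonClass F]

lemma ae_mem_of_sum_measure_preimage_singleton_eq_one [IsProbabilityMeasure μ] {Y : Ω → F}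
    (hY : Measurable Y) {S : Finset F} (hS : ∑ x ∈ S, μ (Y ⁻¹' {x}) = 1) :
    ∀ᵐ ω ∂μ, Y ω ∈ S := by
  change ∀ᵐ ω ∂μ, ω ∈ Y ⁻¹' S
  rw [ae_mem_iff_measure_eq (hY S.measurableSet).nullMeasurableSet, measure_univ, ← hS]
  exact (sum_measure_preimage_singleton S fun x _ => hY (measurableSet_singleton x)).symm

lemma integrable_comp_of_ae_mem_finite [IsFiniteMeasure μ] {E : Type*} {X : Ω → E} {T : Set E}
    (hT : T.Finite) (hXT : ∀ᵐ ω ∂μ, X ω ∈ T) {f : E → ℝ} (hfX : AEStronglyMeasurable (fun ω => f (X ω)) μ) :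
    Integrable (fun ω => f (X ω)) μ := by
  obtain ⟨C, hC⟩ := (hT.image fun x => ‖f x‖).bddAbove
  exact .of_bound hfX C (by filter_upwards [hXT] with ω hω using hC ⟨_, hω, rfl⟩)

lemma condExp_comp_indep_of_ae_mem_finset [IsFiniteMeasure μ] (hℱ : ℱ ≤ mΩ) {Y : Ω → F}
    (hY : Measurable Y) (hindep : Indep (MeasurableSpace.comap Y inferInstance) ℱ μ)
    {S : Finset F} (hYS : ∀ᵐ ω ∂μ, Y ω ∈ S) {G : F → Ω → ℝ}
    (hGm : ∀ s ∈ S, StronglyMeasurable[ℱ] (G s)) (hGi : ∀ s ∈ S, Integrable (G s) μ) :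
    μ[fun ω => G (Y ω) ω | ℱ] =ᵐ[μ] fun ω => ∑ s ∈ S, μ.real (Y ⁻¹' {s}) * G s ω := by
  set fiber : F → Ω → ℝ := fun s => (Y ⁻¹' {s}).indicator 1
  have hfiber_meas : ∀ s, MeasurableSet (Y ⁻¹' {s}) := fun s => hY (measurableSet_singleton s)
  have hfiber_int : ∀ s, Integrable (fiber s) μ :=
    fun s => (integrable_const 1).indicator (hfiber_meas s)
  have hterm_int : ∀ s ∈ S, Integrable (G s * fiber s) μ := fun s hs =>
    (hGi s hs).mul_bdd (hfiber_int s).aestronglyMeasurable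
      (c := 1) (ae_of_all _ fun ω => by simpa using norm_indicator_le_norm_self (1 : Ω → ℝ) ω)
  have hdecomp : (fun ω => G (Y ω) ω) =ᵐ[μ] ∑ s ∈ S, G s * fiber s := by
    filter_upwards [hYS] with ω hω
    rw [Finset.sum_apply, Finset.sum_eq_single_of_mem _ hω]
    · simp [fiber]
    · intro s _ hs
      simp [fiber, Ne.symm hs]
  have hterm : ∀ s ∈ S, μ[G s * fiber s | ℱ] =ᵐ[μ] fun ω => μ.real (Y ⁻¹' {s}) * G s ω := by
    intro s hs
    have hfiber : μ[fiber s | ℱ] =ᵐ[μ] fun _ => μ.real (Y ⁻¹' {s}) := by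
      refine (condExp_indep_eq hY.comap_le hℱ ?_ hindep).trans ?_
      · exact stronglyMeasurable_const.indicator ⟨{s}, measurableSet_singleton s, rfl⟩
      · simp [fiber, integral_indicator_one (hfiber_meas s)]
    filter_upwards [condExp_mul_of_stronglyMeasurable_left (hGm s hs) (hterm_int s hs)
      (hfiber_int s), hfiber] with ω h1 h2
    rw [h1, Pi.mul_apply, h2, mul_comm]
  filter_upwards [condExp_congr_ae hdecomp, condExp_finsetSum hterm_int ℱ,
    (eventually_all_finset S).2 hterm] with ω h1 h2 h3
  rw [h1, h2, Finset.sum_apply]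
  exact Finset.sum_congr rfl h3

end FiniteRange

section Walk

variable {Ω E : Type*} [AddCommMonoid E] {A ξ : ℕ → Ω → E} {x₀ : E}

lemma measurable_walk [MeasurableSpace E] [MeasurableAdd₂ E] {ℱ : MeasurableSpace Ω}
    (hA0 : A 0 = fun _ => x₀) (hA : ∀ n ω, A (n + 1) ω = A n ω + ξ n ω) {n : ℕ}
    (hξ : ∀ k < n, Measurable[ℱ] (ξ k)) : Measurable[ℱ] (A n) := by
  induction n with
  | zero => exact hA0 ▸ measurable_const
  | succ n ih =>
    rw [show A (n + 1) = A n + ξ n from funext (hA n)]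
    exact (ih fun k hk => hξ k (by omega)).add (hξ n n.lt_succ_self)

lemma ae_walk_mem_finite {mΩ : MeasurableSpace Ω} {μ : Measure Ω} (hA0 : A 0 = fun _ => x₀)
    (hA : ∀ n ω, A (n + 1) ω = A n ω + ξ n ω) {S : Set E} (hS : S.Finite)
    (hξS : ∀ n, ∀ᵐ ω ∂μ, ξ n ω ∈ S) (n : ℕ) :
    ∃ T : Set E, T.Finite ∧ ∀ᵐ ω ∂μ, A n ω ∈ T := by
  induction n with
  | zero => exact ⟨{x₀}, Set.finite_singleton x₀, ae_of_all _ fun ω => by simp [hA0]⟩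
  | succ n ih =>
    obtain ⟨T, hT, hAT⟩ := ih
    refine ⟨T + S, hT.add hS, ?_⟩
    filter_upwards [hAT, hξS n] with ω h1 h2
    rw [hA]
    exact Set.add_mem_add h1 h2

end Walk

lemma ProbabilityTheory.iIndepFun.indep_comap_iSup_range {Ω β : Type*}
    {mΩ : MeasurableSpace Ω} {μ : Measure Ω} [MeasurableSpace β] {ξ : ℕ → Ω → β}
    (hξ : ∀ n, Measurable (ξ n)) (hindep : iIndepFun ξ μ) (n : ℕ) :
    Indep (MeasurableSpace.comap (ξ n) inferInstance)
      (⨆ k ∈ Finset.range n, MeasurableSpace.comap (ξ k) inferInstance) μ := by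
  have h := indep_iSup_of_disjoint (fun k => (hξ k).comap_le) hindep.iIndep
    (S := {n}) (T := {k | k < n}) (by simp)
  simpa using h

lemma condExp_walk_succ {Ω E : Type*} {mΩ : MeasurableSpace Ω} {μ : Measure Ω}
    [IsFiniteMeasure μ] [AddCommMonoid E] [MeasurableSpace E] [MeasurableSingletonClass E]
    [Countable E] [MeasurableAdd₂ E] {A ξ : ℕ → Ω → E} {x₀ : E} (hA0 : A 0 = fun _ => x₀)
    (hA : ∀ n ω, A (n + 1) ω = A n ω + ξ n ω) (hξ : ∀ n, Measurable (ξ n))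
    (hindep : iIndepFun ξ μ) {S : Finset E} (hξS : ∀ n, ∀ᵐ ω ∂μ, ξ n ω ∈ S) (f : E → ℝ)
    (n : ℕ) :
    μ[fun ω => f (A (n + 1) ω) | ⨆ k ∈ Finset.range n, MeasurableSpace.comap (ξ k) inferInstance]
      =ᵐ[μ] fun ω => ∑ s ∈ S, μ.real (ξ n ⁻¹' {s}) * f (A n ω + s) := by
  have hℱ : (⨆ k ∈ Finset.range n, MeasurableSpace.comap (ξ k) inferInstance) ≤ mΩ :=
    iSup₂_le fun k _ => (hξ k).comap_le
  have hAmeas : Measurable[⨆ k ∈ Finset.range n, MeasurableSpace.comap (ξ k) inferInstance]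
      (A n) :=
    measurable_walk hA0 hA fun k hk =>
      Measurable.of_comap_le (le_iSup₂_of_le k (Finset.mem_range.2 hk) le_rfl)
  obtain ⟨T, hT, hAT⟩ := ae_walk_mem_finite hA0 hA S.finite_toSet hξS n
  have hfs : ∀ s, Measurable fun x => f (x + s) := fun s => measurable_of_countable _
  simp_rw [hA]
  exact condExp_comp_indep_of_ae_mem_finset hℱ (hξ n) (hindep.indep_comap_iSup_range hξ n)
    (hξS n) (G := fun s ω => f (A n ω + s))
    (fun s _ => ((hfs s).comp hAmeas).stronglyMeasurable)
    (fun s _ => integrable_comp_of_ae_mem_finite hT hAT (f := fun x => f (x + s))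
      ((hfs s).comp (hAmeas.mono hℱ le_rfl)).aestronglyMeasurable)

lemma step_injective (m : ℕ) : Function.Injective (step m) := by
  intro k k' h
  by_contra hne
  wlog hlt : k < k' generalizing k k'
  · exact this h.symm (Ne.symm hne) (lt_of_le_of_ne (not_lt.1 hlt) (Ne.symm hne))
  have hk : (k : ℕ) < m - 1 := by omega
  have := congrFun h ⟨k, hk⟩
  simp only [step] at this
  split_ifs at this <;> omega

lemma sum_step_of_succ_eq {m : ℕ} {i j : Fin (m - 1)} (hij : (j : ℕ) = i + 1)
    (g : ℤ → ℤ → ℝ) :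
    ∑ k : Fin m, g (step m k i) (step m k j)
      = ((m : ℝ) - 3) * g 0 0 + g (-1) 0 + g 1 (-1) + g 0 1 := by
  have hi : (i : ℕ) + 2 < m := by omega
  set f : ℕ → ℝ := fun r =>
    g ((if (i : ℕ) + 1 = r then 1 else 0) - (if (i : ℕ) = r then 1 else 0))
      ((if (i : ℕ) + 2 = r then 1 else 0) - (if (i : ℕ) + 1 = r then 1 else 0)) with hf
  have hterm : ∀ r, f r = g 0 0 + (if r = i then g (-1) 0 - g 0 0 else 0)
      + (if r = i + 1 then g 1 (-1) - g 0 0 else 0)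
      + (if r = i + 2 then g 0 1 - g 0 0 else 0) := by
    intro r
    simp only [hf]
    split_ifs <;> first | omega | simp
  simp only [step, hij, add_assoc, Nat.reduceAdd]
  rw [Fin.sum_univ_eq_sum_range f, Finset.sum_congr rfl fun r _ => hterm r]
  simp only [Finset.sum_add_distrib, Finset.sum_const, Finset.card_range, Finset.sum_ite_eq',
    Finset.mem_range, hi, (by omega : (i : ℕ) < m), (by omega : (i : ℕ) + 1 < m), if_true,
    nsmul_eq_mul]
  ring

noncomputable def pairPotential (m n : ℕ) (u v : ℝ) : ℝ :=
  u ^ 2 * v ^ 2 + 2 / 3 * (u * v) * (u ^ 2 + v ^ 2) - 4 * (n : ℝ) / m * (u * v)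
    - 2 / (m : ℝ) ^ 2 * (n : ℝ) ^ 2 + (1 / (3 * (m : ℝ)) - 2 / (m : ℝ) ^ 2) * n

lemma sum_pairPotential_step {m : ℕ} {i j : Fin (m - 1)} (hij : (j : ℕ) = i + 1) (n : ℕ)
    (u v : ℝ) :
    ∑ k : Fin m, pairPotential m (n + 1) (u + step m k i) (v + step m k j)
      = m * pairPotential m n u v := by
  have hm : (m : ℝ) ≠ 0 := Nat.cast_ne_zero.2 (by omega)
  rw [sum_step_of_succ_eq hij (fun a b => pairPotential m (n + 1) (u + a) (v + b))]
  simp only [pairPotential]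
  push_cast
  field_simp
  ring

theorem stmt_17_general (m : ℕ)
{Ω : Type*} [MeasurableSpace Ω] (μ : Measure Ω) [IsProbabilityMeasure μ]
    (a : Fin (m - 1) → ℕ)
    (ξ : ℕ → Ω → (Fin (m - 1) → ℤ))
    (hmeas : ∀ n, Measurable (ξ n))
    (hindep : iIndepFun ξ μ)
    (hunif : ∀ n (k : Fin m), μ {ω | ξ n ω = step m k} = 1 / m)
    (A : ℕ → Ω → (Fin (m - 1) → ℤ))
    (hA0 : ∀ ω j, A 0 ω j = (a j : ℤ))
    (hA : ∀ n ω, A (n + 1) ω = A n ω + ξ n ω)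
(ℱ : ℕ → MeasurableSpace Ω)
    (hℱ : ∀ n, ℱ n = ⨆ k ∈ Finset.range n, MeasurableSpace.comap (ξ k) inferInstance)
    (i j : Fin (m - 1)) (hij : (j : ℕ) = (i : ℕ) + 1)
    (H : ℕ → Ω → ℝ)
    (hH : ∀ n ω, H n ω = (A n ω i : ℝ) ^ 2 * (A n ω j : ℝ) ^ 2
      + (2 / 3) * ((A n ω i : ℝ) * (A n ω j : ℝ)) * ((A n ω i : ℝ) ^ 2 + (A n ω j : ℝ) ^ 2))
    (M : ℕ → Ω → ℝ)
    (hM : ∀ n ω, M n ω = H n ω - (4 * (n : ℝ) / m) * ((A n ω i : ℝ) * (A n ω j : ℝ))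
      - (2 / (m : ℝ) ^ 2) * (n : ℝ) ^ 2 + (1 / (3 * (m : ℝ)) - 2 / (m : ℝ) ^ 2) * n) :
    ∀ n : ℕ, μ[M (n + 1)|ℱ n] =ᵐ[μ] M n := by
  intro n
  obtain rfl : ℱ = fun n => ⨆ k ∈ Finset.range n, MeasurableSpace.comap (ξ k) inferInstance :=
    funext hℱ
  have hm : m ≠ 0 := by omega
  have hfiber : ∀ n k, μ (ξ n ⁻¹' {step m k}) = 1 / m := hunif
  have hξS : ∀ n, ∀ᵐ ω ∂μ, ξ n ω ∈ Finset.univ.image (step m) := fun n => by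
    refine ae_mem_of_sum_measure_preimage_singleton_eq_one (hmeas n) ?_
    rw [Finset.sum_image fun k _ k' _ h => step_injective m h]
    simp only [hfiber, Finset.sum_const, Finset.card_univ, Fintype.card_fin, nsmul_eq_mul, one_div]
    exact ENNReal.mul_inv_cancel (Nat.cast_ne_zero.2 hm) (ENNReal.natCast_ne_top m)
  have hM_eq : ∀ N, M N = fun ω => pairPotential m N (A N ω i) (A N ω j) := fun N =>
    funext fun ω => by rw [hM, hH, pairPotential]
  filter_upwards [condExp_walk_succ (funext fun ω => funext (hA0 ω)) hA hmeas hindep hξS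
    (fun x => pairPotential m (n + 1) (x i) (x j)) n] with ω hω
  rw [hM_eq, hM_eq n, hω, Finset.sum_image fun k _ k' _ h => step_injective m h]
  simp only [measureReal_def, hfiber, ENNReal.toReal_div, ENNReal.toReal_one,
    ENNReal.toReal_natCast, ← Finset.mul_sum, Pi.add_apply, Int.cast_add,
    sum_pairPotential_step hij]
  rw [one_div, inv_mul_cancel_left₀ (Nat.cast_ne_zero.2 hm)]

/-- For each adjacent pair `i, j = i + 1`, with `H` as in Statement 16,
the process `M n = H n - (4n/m) * A_i n * A_j n - (2/m²) * n² + (1/(3m) - 2/m²) * n` is a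
martingale with respect to the filtration generated by the steps. -/
theorem stmt_17 (m : ℕ) (hm : 3 ≤ m)
{Ω : Type*} [MeasurableSpace Ω] (μ : Measure Ω) [IsProbabilityMeasure μ]
    (a : Fin (m - 1) → ℕ) (ha : ∀ k, 0 < a k)
    (ξ : ℕ → Ω → (Fin (m - 1) → ℤ))
    (hmeas : ∀ n, Measurable (ξ n))
    (hindep : iIndepFun ξ μ)
    (hunif : ∀ n (k : Fin m), μ {ω | ξ n ω = step m k} = 1 / m)
    (A : ℕ → Ω → (Fin (m - 1) → ℤ))
    (hA0 : ∀ ω j, A 0 ω j = (a j : ℤ))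
    (hA : ∀ n ω, A (n + 1) ω = A n ω + ξ n ω)
(ℱ : ℕ → MeasurableSpace Ω)
    (hℱ : ∀ n, ℱ n = ⨆ k ∈ Finset.range n, MeasurableSpace.comap (ξ k) inferInstance)
    (i j : Fin (m - 1)) (hij : (j : ℕ) = (i : ℕ) + 1)
    (H : ℕ → Ω → ℝ)
    (hH : ∀ n ω, H n ω = (A n ω i : ℝ) ^ 2 * (A n ω j : ℝ) ^ 2
      + (2 / 3) * ((A n ω i : ℝ) * (A n ω j : ℝ)) * ((A n ω i : ℝ) ^ 2 + (A n ω j : ℝ) ^ 2))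
    (M : ℕ → Ω → ℝ)
    (hM : ∀ n ω, M n ω = H n ω - (4 * (n : ℝ) / m) * ((A n ω i : ℝ) * (A n ω j : ℝ))
      - (2 / (m : ℝ) ^ 2) * (n : ℝ) ^ 2 + (1 / (3 * (m : ℝ)) - 2 / (m : ℝ) ^ 2) * n) :
    ∀ n : ℕ, μ[M (n + 1)|ℱ n] =ᵐ[μ] M n :=
  stmt_17_general m μ a ξ hmeas hindep hunif A hA0 hA ℱ hℱ i j hij H hH M hM
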